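/- arXiv:2005.08434 — 2 statements merged into one kernel-verified Lean document; each statement's English description precedes it below -/
import Mathlib

section
/- Let (σ_n)_{n≥0} be a nonincreasing sequence of nonnegative reals, s > 0, and σ ≥ σ_0. If (1/2)∑_{i=1}^n log(1 + s⁻² σ_{i-1}²) ≤ γ_n for all n, then σ_n² ≤ (2σ²/log(1 + s⁻²σ²)) · (γ_n / n) for all n ≥ 1. -/
/-!
Concavity of `t ↦ log (1 + t)` with value `0` at `0` gives `x log (1 + c) ≤ c log (1 + x)` for
`0 ≤ x ≤ c`: each information gain `log (1 + s⁻²σᵢ²)` is at least a fixed multiple of `s⁻²σᵢ²`.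
Since the variances decrease, `n σₙ²` is at most their sum, hence at most a multiple of `γₙ`.
-/

open Finset Real

theorem ConcaveOn.mul_le_mul_of_map_zero {f : ℝ → ℝ} {s : Set ℝ} (hf : ConcaveOn ℝ s f)
    (h0 : 0 ∈ s) (hf0 : f 0 = 0) {x c : ℝ} (hc : c ∈ s) (hx : 0 ≤ x) (hxc : x ≤ c) :
    x * f c ≤ c * f x := by
  rcases (hx.trans hxc).eq_or_lt with rfl | hc_pos
  · simp [le_antisymm hxc hx, hf0]
  have hconv := hf.2 h0 hc (sub_nonneg.2 ((div_le_one hc_pos).2 hxc)) (div_nonneg hx hc_pos.le)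
    (sub_add_cancel 1 (x / c))
  have hcomb : (1 - x / c) • (0 : ℝ) + (x / c) • c = x := by simp [hc_pos.ne']
  rw [hcomb, hf0, smul_zero, zero_add, smul_eq_mul, div_mul_eq_mul_div, div_le_iff₀ hc_pos] at hconv
  linarith

theorem mul_log_one_add_le_mul_log_one_add {x c : ℝ} (hx : 0 ≤ x) (hxc : x ≤ c) :
    x * log (1 + c) ≤ c * log (1 + x) :=
  (strictConcaveOn_log_Ioi.concaveOn.translate_right 1).mul_le_mul_of_map_zero
    (by norm_num) (by simp) (show 0 < 1 + c by linarith) hx hxc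

theorem Antitone.nat_mul_mul_log_one_add_le_sum {x : ℕ → ℝ} {c : ℝ} (hanti : Antitone x)
    (hnonneg : ∀ i, 0 ≤ x i) (hxc : x 0 ≤ c) (n : ℕ) :
    n * x n * log (1 + c) ≤ c * ∑ i ∈ range n, log (1 + x i) := by
  have hL : 0 ≤ log (1 + c) := log_nonneg (by linarith [hnonneg 0])
  calc n * x n * log (1 + c) = ∑ _i ∈ range n, x n * log (1 + c) := by simp [mul_assoc]
    _ ≤ ∑ i ∈ range n, x i * log (1 + c) := by
      gcongr with i hi
      exact hanti (mem_range.1 hi).le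
    _ ≤ ∑ i ∈ range n, c * log (1 + x i) := sum_le_sum fun i _ ↦
      mul_log_one_add_le_mul_log_one_add (hnonneg i) ((hanti i.zero_le).trans hxc)
    _ = c * ∑ i ∈ range n, log (1 + x i) := by rw [mul_sum]

/-- Uncertainty reduction: if `(σ_n)` is nonincreasing and nonnegative, `s > 0`,
`σ ≥ σ_0`, and the greedy mutual information sum is bounded by `γ_n`, then
`σ_n² ≤ (2σ²/log(1 + s⁻²σ²)) · (γ_n / n)` for all `n ≥ 1`. -/
theorem uncertainty_reduction (σseq : ℕ → ℝ) (s σ : ℝ) (γ : ℕ → ℝ)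
    (hs : 0 < s) (hσ : σseq 0 ≤ σ) (hσ0 : 0 < σ)
    (hnonneg : ∀ n, 0 ≤ σseq n) (hanti : ∀ n, σseq (n + 1) ≤ σseq n)
    (hMI : ∀ n : ℕ,
      (1 / 2) * ∑ i ∈ range n, Real.log (1 + s⁻¹ ^ 2 * σseq i ^ 2) ≤ γ n) :
    ∀ n : ℕ, 1 ≤ n →
      σseq n ^ 2 ≤ 2 * σ ^ 2 / Real.log (1 + s⁻¹ ^ 2 * σ ^ 2) * (γ n / n) := by
  intro n hn
  have hσ_anti : Antitone σseq := antitone_nat_of_succ_le hanti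
  have hvar_anti : Antitone fun i ↦ s⁻¹ ^ 2 * σseq i ^ 2 := fun i j hij ↦
    mul_le_mul_of_nonneg_left (pow_le_pow_left₀ (hnonneg j) (hσ_anti hij) 2) (by positivity)
  have hsum := hvar_anti.nat_mul_mul_log_one_add_le_sum (fun i ↦ by positivity)
    (mul_le_mul_of_nonneg_left (pow_le_pow_left₀ (hnonneg 0) hσ 2) (by positivity)) n
  have hL : 0 < log (1 + s⁻¹ ^ 2 * σ ^ 2) := log_pos (lt_add_of_pos_right 1 (by positivity))
  have hn_pos : (0 : ℝ) < n := by exact_mod_cast hn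
  rw [mul_div_assoc', div_mul_eq_mul_div, div_div, le_div_iff₀ (by positivity)]
  have hMI' := mul_le_mul_of_nonneg_left (hMI n) (by positivity : 0 ≤ 2 * (s⁻¹ ^ 2 * σ ^ 2))
  refine le_of_mul_le_mul_left ?_ (by positivity : 0 < s⁻¹ ^ 2)
  linarith
end

section
/- Let F : Finset S → ℝ be a monotone submodular set function with F(∅) = 0 on a finite ground set S. Let G_n be the value achieved after n steps of the greedy algorithm that at each step adds the element with maximal marginal gain. Then (1 - 1/e)·max_{|Z|=n} F(Z) ≤ G_n ≤ max_{|Z|=n} F(Z). -/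
/-!
Let `Z` be any set of size `n`. Monotonicity and submodularity bound `F Z - F A` by the sum of the
marginal gains of the elements of `Z` at `A`, each of which is at most the greedy gain;
so every greedy step closes at least a `1/n` fraction of the gap `F Z - F A`. After `n`
steps the gap is at most `(1 - 1/n)^n F Z ≤ F Z / e`.
-/

open Finset

section Submodular

variable {S : Type*} [DecidableEq S] {F : Finset S → ℝ}

theorem le_add_sum_marginal
    (hsubmod : ∀ (A B : Finset S) (x : S), A ⊆ B → x ∉ B →
      F (insert x B) - F B ≤ F (insert x A) - F A)
    (A T : Finset S) :
    F (A ∪ T) ≤ F A + ∑ x ∈ T, (F (insert x A) - F A) := by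
  induction T using Finset.induction_on with
  | empty => simp
  | @insert x T hxT ih =>
    have hgain : F (insert x (A ∪ T)) - F (A ∪ T) ≤ F (insert x A) - F A := by
      by_cases hxA : x ∈ A
      · simp [hxA]
      · exact hsubmod A (A ∪ T) x subset_union_left (by simp [hxA, hxT])
    rw [union_insert, sum_insert hxT]
    linarith

theorem le_add_card_mul_gain_of_greedy
    (hmono : ∀ A B : Finset S, A ⊆ B → F A ≤ F B)
    (hsubmod : ∀ (A B : Finset S) (x : S), A ⊆ B → x ∉ B →
      F (insert x B) - F B ≤ F (insert x A) - F A)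
    {A : Finset S} {x : S} (hx : ∀ y : S, F (insert y A) ≤ F (insert x A)) (Z : Finset S) :
    F Z ≤ F A + #Z * (F (insert x A) - F A) :=
  calc F Z ≤ F (A ∪ Z) := hmono _ _ subset_union_right
    _ ≤ F A + ∑ z ∈ Z, (F (insert z A) - F A) := le_add_sum_marginal hsubmod A Z
    _ ≤ F A + ∑ _z ∈ Z, (F (insert x A) - F A) := by
      gcongr with z
      exact hx z
    _ = F A + #Z * (F (insert x A) - F A) := by rw [sum_const, nsmul_eq_mul]

theorem sub_insert_le_of_greedy
    (hmono : ∀ A B : Finset S, A ⊆ B → F A ≤ F B)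
    (hsubmod : ∀ (A B : Finset S) (x : S), A ⊆ B → x ∉ B →
      F (insert x B) - F B ≤ F (insert x A) - F A)
    {A : Finset S} {x : S} (hx : ∀ y : S, F (insert y A) ≤ F (insert x A)) (Z : Finset S) :
    F Z - F (insert x A) ≤ (1 - 1 / #Z) * (F Z - F A) := by
  have hgain : 0 ≤ F (insert x A) - F A := sub_nonneg.2 (hmono _ _ (subset_insert x A))
  rcases Z.eq_empty_or_nonempty with rfl | hZ
  · simp only [card_empty, Nat.cast_zero, div_zero, sub_zero, one_mul]
    linarith
  have hcard : (0 : ℝ) < #Z := by exact_mod_cast hZ.card_pos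
  have := le_add_card_mul_gain_of_greedy hmono hsubmod hx Z
  have : (F Z - F A) / #Z ≤ F (insert x A) - F A := by
    rw [div_le_iff₀ hcard]
    linarith
  rw [sub_mul, one_mul, one_div_mul_eq_div]
  linarith

end Submodular

section Greedy

variable {S : Type*} [Fintype S] [DecidableEq S] {F : Finset S → ℝ} {G : ℕ → Finset S}

theorem card_greedy (hG0 : G 0 = ∅)
    (hgreedy : ∀ n : ℕ, (G n).card < Fintype.card S →
      ∃ x : S, x ∉ G n ∧ G (n + 1) = insert x (G n) ∧
        ∀ y : S, F (insert y (G n)) ≤ F (insert x (G n)))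
    {k : ℕ} (hk : k ≤ Fintype.card S) : #(G k) = k := by
  induction k with
  | zero => simp [hG0]
  | succ m ih =>
    have hm := ih (by omega)
    obtain ⟨x, hx, hGx, -⟩ := hgreedy m (by omega)
    rw [hGx, card_insert_of_notMem hx, hm]

theorem sub_greedy_le_pow_mul
    (hmono : ∀ A B : Finset S, A ⊆ B → F A ≤ F B)
    (hsubmod : ∀ (A B : Finset S) (x : S), A ⊆ B → x ∉ B →
      F (insert x B) - F B ≤ F (insert x A) - F A)
    (hG0 : G 0 = ∅)
    (hgreedy : ∀ n : ℕ, (G n).card < Fintype.card S →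
      ∃ x : S, x ∉ G n ∧ G (n + 1) = insert x (G n) ∧
        ∀ y : S, F (insert y (G n)) ≤ F (insert x (G n)))
    (Z : Finset S) {k : ℕ} (hk : k ≤ Fintype.card S) :
    F Z - F (G k) ≤ (1 - 1 / #Z) ^ k * (F Z - F ∅) := by
  induction k with
  | zero => simp [hG0]
  | succ m ih =>
    obtain ⟨x, -, hGx, hx⟩ := hgreedy m (by rw [card_greedy hG0 hgreedy (by omega)]; omega)
    have hratio : 0 ≤ 1 - 1 / (#Z : ℝ) := by
      rw [sub_nonneg, one_div]
      exact Nat.cast_inv_le_one _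
    calc F Z - F (G (m + 1)) ≤ (1 - 1 / #Z) * (F Z - F (G m)) := by
          rw [hGx]
          exact sub_insert_le_of_greedy hmono hsubmod hx Z
      _ ≤ (1 - 1 / #Z) * ((1 - 1 / #Z) ^ m * (F Z - F ∅)) := by
          gcongr
          exact ih (by omega)
      _ = (1 - 1 / #Z) ^ (m + 1) * (F Z - F ∅) := by ring

end Greedy

/-- Nemhauser–Wolsey–Fisher: for a monotone submodular `F` with `F ∅ = 0` on a
finite ground set, the greedy algorithm after `n` steps achieves at least a
`(1 - 1/e)` fraction of the best value over sets of cardinality `n`, and of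
course no more than that best value. -/
theorem greedy_submodular_guarantee {S : Type*} [Fintype S] [DecidableEq S]
    (F : Finset S → ℝ)
    (hmono : ∀ A B : Finset S, A ⊆ B → F A ≤ F B)
    (hsubmod : ∀ (A B : Finset S) (x : S), A ⊆ B → x ∉ B →
      F (insert x B) - F B ≤ F (insert x A) - F A)
    (hempty : F ∅ = 0)
    (G : ℕ → Finset S) (hG0 : G 0 = ∅)
    (hgreedy : ∀ n : ℕ, (G n).card < Fintype.card S →
      ∃ x : S, x ∉ G n ∧ G (n + 1) = insert x (G n) ∧
        ∀ y : S, F (insert y (G n)) ≤ F (insert x (G n))) :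
    ∀ n : ℕ, n ≤ Fintype.card S →
      ((∀ Z : Finset S, Z.card = n → (1 - 1 / Real.exp 1) * F Z ≤ F (G n)) ∧
       (∃ Z : Finset S, Z.card = n ∧ F (G n) ≤ F Z)) := by
  intro n hn
  refine ⟨fun Z hZ => ?_, G n, card_greedy hG0 hgreedy hn, le_rfl⟩
  have hFZ : 0 ≤ F Z := hempty ▸ hmono ∅ Z (empty_subset Z)
  rcases n.eq_zero_or_pos with rfl | hnpos
  · simp [card_eq_zero.1 hZ, hG0, hempty]
  have hgap := sub_greedy_le_pow_mul hmono hsubmod hG0 hgreedy Z hn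
  rw [hZ, hempty, sub_zero] at hgap
  have hexp : (1 - 1 / (n : ℝ)) ^ n ≤ 1 / Real.exp 1 := by
    rw [one_div (Real.exp 1), ← Real.exp_neg]
    exact Real.one_sub_div_pow_le_exp_neg (by exact_mod_cast hnpos)
  linarith [mul_le_mul_of_nonneg_right hexp hFZ]
end
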